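/- Let Q(y,x) ∈ (ℚ[y])⟦x⟧ be the Hirzebruch power series. For every natural number n, the coefficient of x^n in the power series Q(y,x)^{n+1} ∈ (ℚ[y])⟦x⟧ equals Σ_{i=0}^{n} (−y)^i = 1 − y + y² − ⋯ + (−y)^n in ℚ[y]. (Since the total Chern class of the tangent bundle of ℂP^n is (1+h)^{n+1}, this coefficient is the degree of the 0-dimensional component of the Hirzebruch class td_{(y)}(TℂP^n) ∩ [ℂP^n], i.e. the χ_y-genus of ℂP^n; this is the normalization condition used to identify the Hirzebruch class.) -/

import Mathlib

open PowerSeries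

/-- The formal power series `(1 - e^{-t})/t = Σ_{n≥0} (-1)^n t^n/(n+1)!` in `ℚ⟦t⟧`. -/
noncomputable def toddDenominator : PowerSeries ℚ :=
  PowerSeries.mk fun n => (-1) ^ n / (Nat.factorial (n + 1) : ℚ)

/-- The Todd power series `T(t) = ((1 - e^{-t})/t)⁻¹ ∈ ℚ⟦t⟧`. -/
noncomputable def toddSeries : PowerSeries ℚ := toddDenominator⁻¹

/-- The Hirzebruch power series `Q(y,x) = T(x(1+y)) - xy ∈ (ℚ[y])⟦x⟧`, where the
coefficient of `x^n` in `T(x(1+y))` is `(1+y)^n` times the coefficient of `t^n` in `T(t)`. -/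
noncomputable def hirzebruchSeries : PowerSeries (Polynomial ℚ) :=
  (PowerSeries.mk fun n =>
      (1 + Polynomial.X : Polynomial ℚ) ^ n * Polynomial.C (PowerSeries.coeff (R := ℚ) n toddSeries))
    - PowerSeries.X * PowerSeries.C (R := Polynomial ℚ) Polynomial.X

/-!
Put `u = e^{-x(1+y)}`. Then `Q = x(1+yu)/(1-u)`, so `w = x/Q = (1-u)/(1+yu)` satisfies the
Riccati equation `w' = (1-w)(1+yw)`. Now `[x^n] Q^{n+1}` is the residue of `dx/w^{n+1}`, and the
substitution `x ↦ w` turns it into the residue of `dw/(w^{n+1}(1-w)(1+yw))`, that is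
`[w^n] 1/((1-w)(1+yw)) = Σ_{i ≤ n} (-y)^i`. The substitution is carried out without residues or
composition: all it needs is `[x^m] Q^{m+1} w' = δ_{m,0}`, which for `m > 0` holds because
`Q^{m+1} w' = x^{m+1} w'/w^{m+1}` is, up to `x^{m+1}`, the derivative of `-w^{-m}/m`.
-/

theorem one_sub_mul_one_add_mul_mul_sum_alternating {A : Type*} [CommRing A] (y t : A)
    (n : ℕ) :
    (1 - t) * (1 + y * t) *
        ∑ i ∈ Finset.range (n + 1), (∑ j ∈ Finset.range (i + 1), (-y) ^ j) * t ^ i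
      = 1 + t ^ (n + 1) * (y * (1 - t) * ∑ j ∈ Finset.range (n + 1), (-y) ^ j - 1) := by
  induction n with
  | zero => simp; ring
  | succ n ih =>
    have hs : ∑ j ∈ Finset.range (n + 2), (-y) ^ j
        = 1 - y * ∑ j ∈ Finset.range (n + 1), (-y) ^ j := by
      rw [Finset.sum_range_succ', Finset.mul_sum]
      simp only [pow_succ, pow_zero, mul_neg, Finset.sum_neg_distrib, mul_comm y]
      ring
    rw [Finset.sum_range_succ _ (n + 1), mul_add, ih, hs]
    ring

namespace PowerSeries

variable {R : Type*} [CommRing R]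

theorem derivative_rescale (a : R) (f : R⟦X⟧) :
    d⁄dX R (rescale a f) = C a * rescale a (d⁄dX R f) := by
  ext n
  simp only [coeff_derivative, coeff_rescale, coeff_C_mul]
  ring

theorem coeff_pow_succ_mul_derivative [IsAddTorsionFree R] {Q w : R⟦X⟧} (hwQ : w * Q = X)
    (hw : constantCoeff w = 0) (m : ℕ) :
    coeff m (Q ^ (m + 1) * d⁄dX R w) = if m = 0 then 1 else 0 := by
  have hd : d⁄dX R w * Q + w * d⁄dX R Q = 1 := by
    simpa [Derivation.leibniz, mul_comm] using congrArg (d⁄dX R) hwQ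
  rcases m with _ | k
  · have h : Q * d⁄dX R w = 1 - w * d⁄dX R Q := by linear_combination hd
    simp [h, hw]
  · have h : Q ^ (k + 2) * d⁄dX R w = Q ^ (k + 1) - X * (Q ^ k * d⁄dX R Q) := by
      linear_combination Q ^ (k + 1) * hd - Q ^ k * d⁄dX R Q * hwQ
    have hpow := coeff_derivative (Q ^ (k + 1)) k
    rw [derivative_pow, Nat.add_sub_cancel, mul_assoc, ← map_natCast (C (R := R)),
      coeff_C_mul] at hpow
    rw [if_neg k.succ_ne_zero, h, map_sub, coeff_succ_X_mul]
    apply nsmul_right_injective k.succ_ne_zero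
    simp only [smul_zero, nsmul_eq_mul, mul_sub]
    push_cast at hpow ⊢
    linear_combination -hpow

/-- Truncated Lagrange inversion: if `w' = φ(w)`, then `[x^n] Q^{n+1} = [t^n] 1/φ(t)`. -/
theorem coeff_pow_succ_eq_of_derivative_mul_sum [IsAddTorsionFree R] {Q w : R⟦X⟧}
    (hwQ : w * Q = X) (hw : constantCoeff w = 0) {n : ℕ} (c : ℕ → R) (E : R⟦X⟧)
    (h : d⁄dX R w * ∑ i ∈ Finset.range (n + 1), C (c i) * w ^ i = 1 + w ^ (n + 1) * E) :
    coeff n (Q ^ (n + 1)) = c n := by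
  have hpow (i : ℕ) (hi : i ≤ n + 1) : Q ^ (n + 1) * w ^ i = X ^ i * Q ^ (n + 1 - i) := by
    rw [← Nat.sub_add_cancel hi, pow_add, Nat.add_sub_cancel, mul_assoc, ← mul_pow,
      mul_comm Q w, hwQ, mul_comm]
  have hsplit : Q ^ (n + 1) = ∑ i ∈ Finset.range (n + 1),
      C (c i) * (X ^ i * (Q ^ (n + 1 - i) * d⁄dX R w)) - X ^ (n + 1) * E := by
    calc Q ^ (n + 1) = Q ^ (n + 1) * (d⁄dX R w * ∑ i ∈ Finset.range (n + 1), C (c i) * w ^ i)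
          - Q ^ (n + 1) * w ^ (n + 1) * E := by rw [h]; ring
      _ = _ := by
        rw [Finset.mul_sum, Finset.mul_sum, hpow _ le_rfl, Nat.sub_self, pow_zero, mul_one]
        congr 1
        refine Finset.sum_congr rfl fun i hi => ?_
        linear_combination (C (c i) * d⁄dX R w) * hpow i (Finset.mem_range.mp hi).le
  have hterm (i : ℕ) (hi : i ∈ Finset.range (n + 1)) :
      coeff n (C (c i) * (X ^ i * (Q ^ (n + 1 - i) * d⁄dX R w))) = if i = n then c n else 0 := by
    rw [Finset.mem_range] at hi
    rw [coeff_C_mul, coeff_X_pow_mul', if_pos (by omega), show n + 1 - i = n - i + 1 by omega,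
      coeff_pow_succ_mul_derivative hwQ hw]
    split_ifs <;> first | omega | simp_all
  rw [hsplit, map_sub, coeff_X_pow_mul', if_neg (by omega), sub_zero, map_sum,
    Finset.sum_congr rfl hterm, Finset.sum_ite_eq', if_pos (Finset.self_mem_range_succ n)]

theorem coeff_pow_succ_of_derivative_eq [IsAddTorsionFree R] {Q w : R⟦X⟧}
    (hwQ : w * Q = X) (hw : constantCoeff w = 0) (y : R)
    (hode : d⁄dX R w = (1 - w) * (1 + C y * w)) (n : ℕ) :
    coeff n (Q ^ (n + 1)) = ∑ j ∈ Finset.range (n + 1), (-y) ^ j := by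
  have key := one_sub_mul_one_add_mul_mul_sum_alternating (C y) w n
  simp only [← map_neg, ← map_pow, ← map_sum, ← hode] at key
  exact coeff_pow_succ_eq_of_derivative_mul_sum hwQ hw _ _ key

theorem derivative_eq_of_mul_one_add_eq [IsDomain R] (y : R) (hy : 1 + y ≠ 0) {u w : R⟦X⟧}
    (hu : d⁄dX R u = -(C (1 + y) * u)) (hw : w * (1 + C y * u) = 1 - u) :
    d⁄dX R w = (1 - w) * (1 + C y * w) := by
  have hd : w * (C y * d⁄dX R u) + (1 + u * C y) * d⁄dX R w = -d⁄dX R u := by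
    simpa [Derivation.leibniz, mul_comm] using congrArg (d⁄dX R) hw
  rw [hu, map_add, map_one] at hd
  refine mul_left_cancel₀ ((map_ne_zero_iff C C_injective).2 hy) ?_
  rw [map_add, map_one]
  linear_combination (1 + C y * w) * hd + ((1 + C y) * (1 + C y * w) - C y * d⁄dX R w) * hw

end PowerSeries

theorem constantCoeff_toddDenominator : constantCoeff toddDenominator = 1 := by
  simp [toddDenominator, ← coeff_zero_eq_constantCoeff_apply]

theorem toddDenominator_mul_toddSeries : toddDenominator * toddSeries = 1 :=
  PowerSeries.mul_inv_cancel _ (by simp [constantCoeff_toddDenominator])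

theorem X_mul_toddDenominator : X * toddDenominator = 1 - rescale (-1) (exp ℚ) := by
  ext (_ | n)
  · rw [map_sub, coeff_rescale]
    simp
  · rw [coeff_succ_X_mul]
    simp [toddDenominator, pow_succ, div_eq_mul_inv]

theorem hirzebruchSeries_eq :
    hirzebruchSeries = rescale (1 + Polynomial.X) (map Polynomial.C toddSeries)
      - X * C Polynomial.X := by
  ext n
  simp [hirzebruchSeries]

theorem constantCoeff_hirzebruchSeries : constantCoeff hirzebruchSeries = 1 := by
  rw [← coeff_zero_eq_constantCoeff_apply]
  simp [hirzebruchSeries, toddSeries, constantCoeff_toddDenominator]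

theorem hirzebruchSeries_mul_one_sub_exp :
    hirzebruchSeries * (1 - rescale (-(1 + Polynomial.X)) (exp (Polynomial ℚ)))
      = X * (1 + C Polynomial.X * rescale (-(1 + Polynomial.X)) (exp (Polynomial ℚ))) := by
  have hT := congrArg (rescale (1 + Polynomial.X) ∘ map Polynomial.C)
    toddDenominator_mul_toddSeries
  have hD := congrArg (rescale (1 + Polynomial.X) ∘ map Polynomial.C) X_mul_toddDenominator
  simp only [Function.comp_apply, map_mul, map_one, map_sub, map_X, rescale_X] at hT hD
  rw [← rescale_map, map_neg, map_one, map_exp, rescale_rescale, neg_one_mul, map_add,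
    map_one] at hD
  rw [hirzebruchSeries_eq]
  linear_combination (1 + C Polynomial.X) * X * hT
    - rescale (1 + Polynomial.X) (map Polynomial.C toddSeries) * hD

/-- Normalization: for every `n`, the coefficient of `x^n` in `Q(y,x)^{n+1}` is
`1 - y + y² - ⋯ + (-y)^n`, the `χ_y`-genus of `ℂP^n`. -/
theorem coeff_hirzebruchSeries_pow (n : ℕ) :
    PowerSeries.coeff (R := Polynomial ℚ) n (hirzebruchSeries ^ (n + 1))
      = ∑ i ∈ Finset.range (n + 1), (-Polynomial.X : Polynomial ℚ) ^ i := by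
  obtain ⟨v, hv⟩ := (isUnit_iff_constantCoeff.2
    (by simp [constantCoeff_hirzebruchSeries]) : IsUnit hirzebruchSeries).exists_right_inv
  set u := rescale (-(1 + Polynomial.X)) (exp (Polynomial ℚ))
  have hwQ : X * v * hirzebruchSeries = X := by linear_combination X * hv
  have hwu : X * v * (1 + C Polynomial.X * u) = 1 - u := by
    linear_combination (1 - u) * hv - v * hirzebruchSeries_mul_one_sub_exp
  have hu : d⁄dX (Polynomial ℚ) u = -(C (1 + Polynomial.X) * u) := by
    rw [derivative_rescale, derivative_exp, map_neg, neg_mul]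
  have hy : (1 + Polynomial.X : Polynomial ℚ) ≠ 0 := by
    simpa [add_comm] using Polynomial.X_add_C_ne_zero (1 : ℚ)
  exact coeff_pow_succ_of_derivative_eq hwQ (by simp) _
    (derivative_eq_of_mul_one_add_eq _ hy hu hwu) n
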